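/- The reaction rates for the four species are compatible with the stoichiometry: the quantities 𝒥_i defined below satisfy 𝒥₁ = 𝒥₂ and 𝒥₃ = 𝒥₄ = −𝒥₁; that is, 𝒥_i = λ_i 𝒥₁ with λ₁ = λ₂ = 1 and λ₃ = λ₄ = −1. -/

import Mathlib

noncomputable section

/-- The upper incomplete gamma function `Γ(η, x) = ∫_x^∞ t^{η−1} e^{−t} dt`. -/
def iGamma (η x : ℝ) : ℝ := ∫ t in Set.Ioi x, t ^ (η - 1) * Real.exp (-t)

/-- Reduced mass. -/
def rmass (a b : ℝ) : ℝ := a * b / (a + b)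

/-!
Both incomplete gamma functions that occur are elementary, `Γ(1, x) = e^{-x}` and
`Γ(2, x) = (x + 1) e^{-x}`, so the energy factor of every rate collapses to
`(2 k_B T / μ) e^{-ζ / (k_B T)}`. Running the reaction backwards lowers the activation energy by
`Q_R`, which produces a factor `e^{Q_R / (k_B T)}` cancelling the `e^{-Q_R / (k_B T)}` of the
backward rate, while writing `μ = p²`, `ν = q²` shows that the mass-dependent prefactors of
the two directions agree. Hence `𝒥₃ = -𝒥₁`; the equalities `𝒥₂ = 𝒥₁` and `𝒥₄ = 𝒥₃` only use
the symmetry of the reduced mass.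
-/

open Real Set Filter Topology MeasureTheory

lemma iGamma_one (x : ℝ) : iGamma 1 x = exp (-x) := by
  simpa [iGamma] using integral_exp_neg_Ioi x

lemma iGamma_two (x : ℝ) : iGamma 2 x = (x + 1) * exp (-x) := by
  have hderiv : ∀ t ∈ Ici x,
      HasDerivAt (fun t => -((t + 1) * exp (-t))) (t * exp (-t)) t := by
    intro t _
    exact (((hasDerivAt_id' t).add_const 1).mul (hasDerivAt_neg t).exp).neg.congr_deriv (by ring)
  have hint : IntegrableOn (fun t => t * exp (-t)) (Ioi x) := by
    refine integrable_of_isBigO_exp_neg one_half_pos (by fun_prop) ?_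
    convert (Gamma_integrand_isLittleO 1).isBigO using 2 with t
    rw [rpow_one, mul_comm]
  have hlim : Tendsto (fun t => -((t + 1) * exp (-t))) atTop (𝓝 0) := by
    have := (tendsto_pow_mul_exp_neg_atTop_nhds_zero 1).add tendsto_exp_neg_atTop_nhds_zero
    simpa [add_mul] using this.neg
  have hiGamma_two : iGamma 2 x = ∫ t in Ioi x, t * exp (-t) := by
    norm_num [iGamma]
  rw [hiGamma_two, integral_Ioi_of_hasDerivAt_of_tendsto' hderiv hint hlim]
  ring

lemma iGamma_two_sub_mul_iGamma_one (x : ℝ) : iGamma 2 x - x * iGamma 1 x = exp (-x) := by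
  rw [iGamma_two, iGamma_one]
  ring

lemma rmass_comm (a b : ℝ) : rmass a b = rmass b a := by
  rw [rmass, rmass, mul_comm, add_comm]

lemma rmass_pos {a b : ℝ} (ha : 0 < a) (hb : 0 < b) : 0 < rmass a b := by
  unfold rmass
  positivity

-- `θ = k_B T`; `μ`, `ν` are the reduced masses of the consumed and the produced pair, whose
-- concentration products are `b` and `a`.
def reactionRate (σ θ μ ν Q ζ a b : ℝ) : ℝ :=
  σ ^ 2 * √(2 * π * μ / θ) * (√(μ / ν) * a * exp (Q / θ) - b) *
    ((2 * θ / μ) * iGamma 2 (ζ / θ) - (2 * ζ / μ) * iGamma 1 (ζ / θ))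

lemma reactionRate_eq {θ : ℝ} (hθ : θ ≠ 0) (σ μ ν Q ζ a b : ℝ) :
    reactionRate σ θ μ ν Q ζ a b =
      σ ^ 2 * √(2 * π * μ / θ) * (√(μ / ν) * a * exp (Q / θ) - b) * (2 * θ / μ) *
        exp (-(ζ / θ)) := by
  rw [reactionRate, ← iGamma_two_sub_mul_iGamma_one]
  field_simp

lemma reactionRate_reverse {θ μ ν : ℝ} (hθ : 0 < θ) (hμ : 0 < μ) (hν : 0 < ν)
    (σ Q ζ a b : ℝ) :
    reactionRate σ θ ν μ (-Q) (ζ - Q) b a = -reactionRate σ θ μ ν Q ζ a b := by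
  obtain ⟨p, hp, rfl⟩ : ∃ p, 0 < p ∧ μ = p ^ 2 :=
    ⟨√μ, sqrt_pos.2 hμ, (sq_sqrt hμ.le).symm⟩
  obtain ⟨q, hq, rfl⟩ : ∃ q, 0 < q ∧ ν = q ^ 2 :=
    ⟨√ν, sqrt_pos.2 hν, (sq_sqrt hν.le).symm⟩
  have hk : 0 ≤ 2 * π / θ := by positivity
  have sqrt_scaled : ∀ r, 0 < r → √(2 * π * r ^ 2 / θ) = √(2 * π / θ) * r := by
    intro r hr
    rw [← div_mul_eq_mul_div, sqrt_mul hk, sqrt_sq hr.le]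
  have sqrt_ratio : ∀ r s, 0 < r → 0 < s → √(r ^ 2 / s ^ 2) = r / s := by
    intro r s hr hs
    rw [← div_pow, sqrt_sq (by positivity)]
  rw [reactionRate_eq hθ.ne', reactionRate_eq hθ.ne', sqrt_scaled p hp, sqrt_scaled q hq,
    sqrt_ratio p q hp hq, sqrt_ratio q p hq hp, neg_div, exp_neg,
    show -((ζ - Q) / θ) = -(ζ / θ) + Q / θ by ring, exp_add]
  field_simp
  ring

theorem reaction_rates_stoichiometry_general
    (m1 m2 m3 m4 : ℝ) (hm1 : 0 < m1) (hm2 : 0 < m2) (hm3 : 0 < m3) (hm4 : 0 < m4)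
    (QR σ T kB : ℝ) (hT : 0 < T) (hkB : 0 < kB)
    (ζ1 ζ2 ζ3 ζ4 : ℝ) (hζ12 : ζ2 = ζ1) (hζ3 : ζ3 = ζ1 - QR)
    (hζ34 : ζ4 = ζ3)
    (c1 c2 c3 c4 : ℝ)
    (J1 J2 J3 J4 : ℝ)
    (hJ1 : J1 = σ ^ 2 * Real.sqrt (2 * Real.pi * rmass m1 m2 / (kB * T)) *
      (Real.sqrt (rmass m1 m2 / rmass m3 m4) * (c3 * c4) * Real.exp (QR / (kB * T))
        - c1 * c2) *
      ((2 * kB * T / rmass m1 m2) * iGamma 2 (ζ1 / (kB * T))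
        - (2 * ζ1 / rmass m1 m2) * iGamma 1 (ζ1 / (kB * T))))
    (hJ2 : J2 = σ ^ 2 * Real.sqrt (2 * Real.pi * rmass m2 m1 / (kB * T)) *
      (Real.sqrt (rmass m2 m1 / rmass m4 m3) * (c4 * c3) * Real.exp (QR / (kB * T))
        - c2 * c1) *
      ((2 * kB * T / rmass m2 m1) * iGamma 2 (ζ2 / (kB * T))
        - (2 * ζ2 / rmass m2 m1) * iGamma 1 (ζ2 / (kB * T))))
    (hJ3 : J3 = σ ^ 2 * Real.sqrt (2 * Real.pi * rmass m3 m4 / (kB * T)) *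
      (Real.sqrt (rmass m3 m4 / rmass m1 m2) * (c1 * c2) * Real.exp (-QR / (kB * T))
        - c3 * c4) *
      ((2 * kB * T / rmass m3 m4) * iGamma 2 (ζ3 / (kB * T))
        - (2 * ζ3 / rmass m3 m4) * iGamma 1 (ζ3 / (kB * T))))
    (hJ4 : J4 = σ ^ 2 * Real.sqrt (2 * Real.pi * rmass m4 m3 / (kB * T)) *
      (Real.sqrt (rmass m4 m3 / rmass m2 m1) * (c2 * c1) * Real.exp (-QR / (kB * T))
        - c4 * c3) *
      ((2 * kB * T / rmass m4 m3) * iGamma 2 (ζ4 / (kB * T))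
        - (2 * ζ4 / rmass m4 m3) * iGamma 1 (ζ4 / (kB * T)))) :
    J2 = J1 ∧ J3 = -J1 ∧ J4 = -J1 := by
  have hJ1' : J1 = reactionRate σ (kB * T) (rmass m1 m2) (rmass m3 m4) QR ζ1
      (c3 * c4) (c1 * c2) := by
    rw [hJ1, reactionRate, mul_assoc 2 kB T]
  have hJ3' : J3 = reactionRate σ (kB * T) (rmass m3 m4) (rmass m1 m2) (-QR) (ζ1 - QR)
      (c1 * c2) (c3 * c4) := by
    rw [hJ3, hζ3, reactionRate, mul_assoc 2 kB T]
  have hJ31 : J3 = -J1 := by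
    rw [hJ3', hJ1',
      reactionRate_reverse (mul_pos hkB hT) (rmass_pos hm1 hm2) (rmass_pos hm3 hm4)]
  refine ⟨?_, hJ31, ?_⟩
  · rw [hJ2, hJ1, rmass_comm m2 m1, rmass_comm m4 m3, hζ12]
    ring
  · rw [← hJ31, hJ4, hJ3, rmass_comm m4 m3, rmass_comm m2 m1, hζ34]
    ring

/-- The reaction rates of the four species are compatible with the
stoichiometry: `𝒥₁ = 𝒥₂` and `𝒥₃ = 𝒥₄ = −𝒥₁`. -/
theorem reaction_rates_stoichiometry
    (m1 m2 m3 m4 : ℝ) (hm1 : 0 < m1) (hm2 : 0 < m2) (hm3 : 0 < m3) (hm4 : 0 < m4)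
    (hM : m1 + m2 = m3 + m4)
    (QR σ T kB : ℝ) (hσ : 0 < σ) (hT : 0 < T) (hkB : 0 < kB)
    (ζ1 ζ2 ζ3 ζ4 : ℝ) (hζ1 : max 0 QR ≤ ζ1) (hζ12 : ζ2 = ζ1) (hζ3 : ζ3 = ζ1 - QR)
    (hζ34 : ζ4 = ζ3)
    (c1 c2 c3 c4 : ℝ) (hc1 : 0 ≤ c1) (hc2 : 0 ≤ c2) (hc3 : 0 ≤ c3) (hc4 : 0 ≤ c4)
    (J1 J2 J3 J4 : ℝ)
    (hJ1 : J1 = σ ^ 2 * Real.sqrt (2 * Real.pi * rmass m1 m2 / (kB * T)) *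
      (Real.sqrt (rmass m1 m2 / rmass m3 m4) * (c3 * c4) * Real.exp (QR / (kB * T))
        - c1 * c2) *
      ((2 * kB * T / rmass m1 m2) * iGamma 2 (ζ1 / (kB * T))
        - (2 * ζ1 / rmass m1 m2) * iGamma 1 (ζ1 / (kB * T))))
    (hJ2 : J2 = σ ^ 2 * Real.sqrt (2 * Real.pi * rmass m2 m1 / (kB * T)) *
      (Real.sqrt (rmass m2 m1 / rmass m4 m3) * (c4 * c3) * Real.exp (QR / (kB * T))
        - c2 * c1) *
      ((2 * kB * T / rmass m2 m1) * iGamma 2 (ζ2 / (kB * T))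
        - (2 * ζ2 / rmass m2 m1) * iGamma 1 (ζ2 / (kB * T))))
    (hJ3 : J3 = σ ^ 2 * Real.sqrt (2 * Real.pi * rmass m3 m4 / (kB * T)) *
      (Real.sqrt (rmass m3 m4 / rmass m1 m2) * (c1 * c2) * Real.exp (-QR / (kB * T))
        - c3 * c4) *
      ((2 * kB * T / rmass m3 m4) * iGamma 2 (ζ3 / (kB * T))
        - (2 * ζ3 / rmass m3 m4) * iGamma 1 (ζ3 / (kB * T))))
    (hJ4 : J4 = σ ^ 2 * Real.sqrt (2 * Real.pi * rmass m4 m3 / (kB * T)) *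
      (Real.sqrt (rmass m4 m3 / rmass m2 m1) * (c2 * c1) * Real.exp (-QR / (kB * T))
        - c4 * c3) *
      ((2 * kB * T / rmass m4 m3) * iGamma 2 (ζ4 / (kB * T))
        - (2 * ζ4 / rmass m4 m3) * iGamma 1 (ζ4 / (kB * T)))) :
    J2 = J1 ∧ J3 = -J1 ∧ J4 = -J1 :=
  reaction_rates_stoichiometry_general m1 m2 m3 m4 hm1 hm2 hm3 hm4 QR σ T kB hT hkB ζ1 ζ2 ζ3 ζ4 hζ12
    hζ3 hζ34 c1 c2 c3 c4 J1 J2 J3 J4 hJ1 hJ2 hJ3 hJ4
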